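/- Let A be a perfect k-algebra and let S be a finite-dimensional commutative associative unital k-algebra. Then the map ψ : C(A)⊗S → C(A⊗S), determined by ψ(γ⊗s) = γ⊗L_s, is an isomorphism of associative algebras. -/

import Mathlib

/-!
Fix a basis `bᵢ` of `S` with coordinate functionals `φᵢ`; every `z` in `M ⊗ S` is
`∑ (id ⊗ φᵢ) z ⊗ bᵢ`. The slice maps `id ⊗ φᵢ : A ⊗ S → A` commute with multiplication by
`A ⊗ 1` on either side, so for `T` in the centroid of `A ⊗ S` the slices
`a ↦ (id ⊗ φᵢ) (T (a ⊗ 1))` lie in `C(A)`, and `ψ (∑ sliceᵢ ⊗ bᵢ)` agrees with `T` on `A ⊗ 1`.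
As `A` is perfect, the products `(x ⊗ 1) (y ⊗ s) = x y ⊗ s` span `A ⊗ S`, so a centroid element is
determined by its values on `A ⊗ 1`; this gives surjectivity onto the centroid. Injectivity:
the slices of `ψ u (a ⊗ 1)` are the slices of `u` evaluated at `a`.
-/

open TensorProduct

noncomputable section

/-- The set of derivations of a (possibly non-associative, non-unital) `k`-algebra `B`,
as a submodule of `Module.End k B`. -/
def Derivations (k B : Type) [Field k] [NonUnitalNonAssocSemiring B] [Module k B]
    [SMulCommClass k B B] [IsScalarTower k B B] :
    Submodule k (Module.End k B) where
  carrier := {d | ∀ x y : B, d (x * y) = d x * y + x * d y}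
  add_mem' := by
    intro f g hf hg x y
    simp only [LinearMap.add_apply, hf x y, hg x y, add_mul, mul_add]
    abel
  zero_mem' := by intro x y; simp
  smul_mem' := by
    intro c f hf x y
    simp only [LinearMap.smul_apply, hf x y, smul_add, smul_mul_assoc, mul_smul_comm]

/-- The centroid of a (possibly non-associative, non-unital) `k`-algebra `B`, as a
subalgebra of `Module.End k B`. -/
def centroid (k B : Type) [Field k] [NonUnitalNonAssocSemiring B] [Module k B]
    [SMulCommClass k B B] [IsScalarTower k B B] :
    Subalgebra k (Module.End k B) where
  carrier := {γ | ∀ x y : B, γ (x * y) = γ x * y ∧ γ (x * y) = x * γ y}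
  mul_mem' := by
    intro γ δ hγ hδ x y
    constructor
    · show γ (δ (x * y)) = γ (δ x) * y
      rw [(hδ x y).1, (hγ (δ x) y).1]
    · show γ (δ (x * y)) = x * γ (δ y)
      rw [(hδ x y).2, (hγ x (δ y)).2]
  one_mem' := by intro x y; exact ⟨rfl, rfl⟩
  add_mem' := by
    intro γ δ hγ hδ x y
    constructor
    · simp [LinearMap.add_apply, (hγ x y).1, (hδ x y).1, add_mul]
    · simp [LinearMap.add_apply, (hγ x y).2, (hδ x y).2, mul_add]
  zero_mem' := by intro x y; simp
  algebraMap_mem' := by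
    intro c x y
    constructor
    · simp [Module.algebraMap_end_apply, smul_mul_assoc]
    · simp [Module.algebraMap_end_apply, mul_smul_comm]

/-- A `k`-algebra is perfect if it is spanned by products. -/
def IsPerfectAlg (k B : Type) [Field k] [NonUnitalNonAssocSemiring B] [Module k B] : Prop :=
  Submodule.span k {z : B | ∃ x y : B, x * y = z} = ⊤

/-- The natural map `ψ : C(A) ⊗ S → End(A ⊗ S)`, `γ ⊗ s ↦ γ ⊗ L_s`. -/
def psi (k A S : Type) [Field k] [NonUnitalNonAssocRing A] [Module k A]
    [SMulCommClass k A A] [IsScalarTower k A A] [CommRing S] [Algebra k S] :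
    (↥(centroid k A) ⊗[k] S) →ₗ[k] Module.End k (A ⊗[k] S) :=
  (TensorProduct.homTensorHomMap (RingHom.id k) A S A S).comp
    (TensorProduct.map (centroid k A).val.toLinearMap (LinearMap.mul k S))
/-- `B` is finitely generated as a module over a set `Γ` of `k`-linear endomorphisms
(e.g. over its centroid or differential centroid). -/
def FGOverSet (k B : Type) [Field k] [AddCommMonoid B] [Module k B]
    (Γ : Set (Module.End k B)) : Prop :=
  ∃ (n : ℕ) (a : Fin n → B), ∀ x : B, ∃ γ : Fin n → Module.End k B,
    (∀ i, γ i ∈ Γ) ∧ x = ∑ i, γ i (a i)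

section Slice

variable {k S : Type} [Field k] [Semiring S] [Algebra k S]

def rightSlice (M : Type) [AddCommMonoid M] [Module k M] (φ : Module.Dual k S) :
    M ⊗[k] S →ₗ[k] M :=
  TensorProduct.rid k M ∘ₗ φ.lTensor M

@[simp]
lemma rightSlice_tmul {M : Type} [AddCommMonoid M] [Module k M] (φ : Module.Dual k S)
    (m : M) (s : S) : rightSlice M φ (m ⊗ₜ s) = φ s • m :=
  rfl

lemma sum_rightSlice_coord_tmul {M : Type} [AddCommMonoid M] [Module k M] {ι : Type}
    [Fintype ι] (b : Module.Basis ι k S) (z : M ⊗[k] S) :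
    ∑ i, rightSlice M (b.coord i) z ⊗ₜ[k] b i = z := by
  induction z using TensorProduct.induction_on with
  | zero => simp
  | tmul m s =>
    simp_rw [rightSlice_tmul, TensorProduct.smul_tmul, ← TensorProduct.tmul_sum,
      Module.Basis.coord_apply, b.sum_repr]
  | add z w hz hw => simp only [map_add, TensorProduct.add_tmul, Finset.sum_add_distrib, hz, hw]

variable {A : Type} [NonUnitalNonAssocSemiring A] [Module k A] [SMulCommClass k A A]
  [IsScalarTower k A A]

lemma rightSlice_mul_tmul_one (φ : Module.Dual k S) (z : A ⊗[k] S) (y : A) :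
    rightSlice A φ (z * y ⊗ₜ 1) = rightSlice A φ z * y := by
  induction z using TensorProduct.induction_on with
  | zero => simp
  | tmul x s => simp [Algebra.TensorProduct.tmul_mul_tmul, smul_mul_assoc]
  | add z w hz hw => simp only [add_mul, map_add, hz, hw]

lemma rightSlice_tmul_one_mul (φ : Module.Dual k S) (z : A ⊗[k] S) (y : A) :
    rightSlice A φ (y ⊗ₜ 1 * z) = y * rightSlice A φ z := by
  induction z using TensorProduct.induction_on with
  | zero => simp
  | tmul x s => simp [Algebra.TensorProduct.tmul_mul_tmul, mul_smul_comm]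
  | add z w hz hw => simp only [mul_add, map_add, hz, hw]

lemma rightSlice_comp_mem_centroid (φ : Module.Dual k S) {T : Module.End k (A ⊗[k] S)}
    (hT : T ∈ centroid k (A ⊗[k] S)) :
    rightSlice A φ ∘ₗ T ∘ₗ (TensorProduct.mk k A S).flip 1 ∈ centroid k A := by
  intro x y
  have hxy : (x * y) ⊗ₜ[k] (1 : S) = x ⊗ₜ 1 * y ⊗ₜ 1 := by
    rw [Algebra.TensorProduct.tmul_mul_tmul, one_mul]
  simp only [LinearMap.comp_apply, LinearMap.flip_apply, TensorProduct.mk_apply, hxy]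
  exact ⟨by rw [(hT _ _).1, rightSlice_mul_tmul_one], by rw [(hT _ _).2, rightSlice_tmul_one_mul]⟩

lemma span_tmul_one_mul_eq_top (hA : IsPerfectAlg k A) :
    Submodule.span k {z : A ⊗[k] S | ∃ x ∈ Set.range (· ⊗ₜ[k] (1 : S)), ∃ y, x * y = z} = ⊤ := by
  refine Submodule.eq_top_iff'.2 fun z => ?_
  induction z using TensorProduct.induction_on with
  | zero => exact zero_mem _
  | tmul a s =>
    have hmap : Submodule.map ((TensorProduct.mk k A S).flip s)
        (Submodule.span k {z : A | ∃ x y : A, x * y = z}) ≤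
        Submodule.span k {z : A ⊗[k] S | ∃ x ∈ Set.range (· ⊗ₜ[k] (1 : S)), ∃ y, x * y = z} := by
      rw [Submodule.map_span]
      refine Submodule.span_mono ?_
      rintro _ ⟨_, ⟨x, y, rfl⟩, rfl⟩
      exact ⟨x ⊗ₜ 1, ⟨x, rfl⟩, y ⊗ₜ s, by rw [Algebra.TensorProduct.tmul_mul_tmul, one_mul]; rfl⟩
    rw [IsPerfectAlg] at hA
    exact hmap ⟨a, hA ▸ Submodule.mem_top, rfl⟩
  | add z w hz hw => exact add_mem hz hw

end Slice

section Centroid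

variable {k : Type} [Field k]

lemma centroid_ext {B : Type} [NonUnitalNonAssocSemiring B] [Module k B] [SMulCommClass k B B]
    [IsScalarTower k B B] {X : Set B}
    (hX : Submodule.span k {z | ∃ x ∈ X, ∃ y, x * y = z} = ⊤) {T T' : Module.End k B}
    (hT : T ∈ centroid k B) (hT' : T' ∈ centroid k B) (h : Set.EqOn T T' X) : T = T' :=
  LinearMap.ext_on hX <| by
    rintro _ ⟨x, hx, y, rfl⟩
    rw [(hT x y).1, (hT' x y).1, h hx]

variable {A B : Type} [NonUnitalNonAssocSemiring A] [Module k A] [SMulCommClass k A A]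
  [IsScalarTower k A A] [NonUnitalNonAssocSemiring B] [Module k B] [SMulCommClass k B B]
  [IsScalarTower k B B]

lemma mem_centroid_tensorProduct_of_tmul {T : Module.End k (A ⊗[k] B)}
    (h : ∀ (a c : A) (b d : B), T (a ⊗ₜ b * c ⊗ₜ d) = T (a ⊗ₜ b) * c ⊗ₜ d ∧
      T (a ⊗ₜ b * c ⊗ₜ d) = a ⊗ₜ b * T (c ⊗ₜ d)) :
    T ∈ centroid k (A ⊗[k] B) := by
  have hleft : (LinearMap.mul k (A ⊗[k] B)).compr₂ T = (LinearMap.mul k _).comp T :=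
    TensorProduct.ext' fun a b => TensorProduct.ext' fun c d => (h a c b d).1
  have hright : (LinearMap.mul k (A ⊗[k] B)).compr₂ T = (LinearMap.mul k _).compl₂ T :=
    TensorProduct.ext' fun a b => TensorProduct.ext' fun c d => (h a c b d).2
  exact fun z w => ⟨LinearMap.congr_fun₂ hleft z w, LinearMap.congr_fun₂ hright z w⟩

lemma map_mem_centroid {γ : Module.End k A} {δ : Module.End k B} (hγ : γ ∈ centroid k A)
    (hδ : δ ∈ centroid k B) : TensorProduct.map γ δ ∈ centroid k (A ⊗[k] B) :=
  mem_centroid_tensorProduct_of_tmul fun a c b d => by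
    simp only [Algebra.TensorProduct.tmul_mul_tmul, TensorProduct.map_tmul]
    exact ⟨by rw [(hγ a c).1, (hδ b d).1], by rw [(hγ a c).2, (hδ b d).2]⟩

lemma mul_mem_centroid {S : Type} [CommSemiring S] [Algebra k S] (s : S) :
    LinearMap.mul k S s ∈ centroid k S :=
  fun x y => ⟨(mul_assoc s x y).symm, mul_left_comm s x y⟩

end Centroid

section Psi

variable (k A S : Type) [Field k] [NonUnitalNonAssocRing A] [Module k A]
  [SMulCommClass k A A] [IsScalarTower k A A] [CommRing S] [Algebra k S]

def psiAlgHom : (↥(centroid k A) ⊗[k] S) →ₐ[k] Module.End k (A ⊗[k] S) :=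
  Module.endTensorEndAlgHom.comp (Algebra.TensorProduct.map (centroid k A).val (Algebra.lmul k S))

lemma psiAlgHom_toLinearMap : (psiAlgHom k A S).toLinearMap = psi k A S :=
  TensorProduct.ext' fun _ _ => rfl

variable {k A S}

lemma psi_tmul (γ : centroid k A) (s : S) :
    psi k A S (γ ⊗ₜ s) = TensorProduct.map (γ : Module.End k A) (LinearMap.mul k S s) :=
  rfl

lemma psi_mem_centroid (u : ↥(centroid k A) ⊗[k] S) : psi k A S u ∈ centroid k (A ⊗[k] S) := by
  induction u using TensorProduct.induction_on with
  | zero => rw [map_zero]; exact zero_mem _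
  | tmul γ s => exact psi_tmul γ s ▸ map_mem_centroid γ.2 (mul_mem_centroid s)
  | add u v hu hv => rw [map_add]; exact add_mem hu hv

lemma rightSlice_psi_apply_tmul_one (φ : Module.Dual k S) (u : ↥(centroid k A) ⊗[k] S) (a : A) :
    rightSlice A φ (psi k A S u (a ⊗ₜ 1)) = (rightSlice (centroid k A) φ u : Module.End k A) a := by
  induction u using TensorProduct.induction_on with
  | zero => simp
  | tmul γ s => simp [psi_tmul]
  | add u v hu hv => simp only [map_add, LinearMap.add_apply, hu, hv, Subalgebra.coe_add]

variable [FiniteDimensional k S]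

lemma psi_injective : Function.Injective (psi k A S) := by
  let b := Module.finBasis k S
  refine (injective_iff_map_eq_zero _).2 fun u hu => ?_
  have hslice : ∀ i, rightSlice (centroid k A) (b.coord i) u = 0 := fun i =>
    Subtype.ext <| LinearMap.ext fun a => by
      rw [← rightSlice_psi_apply_tmul_one, hu]
      simp
  rw [← sum_rightSlice_coord_tmul b u]
  simp [hslice]

lemma mem_range_psi_of_mem_centroid (hA : IsPerfectAlg k A) {T : Module.End k (A ⊗[k] S)}
    (hT : T ∈ centroid k (A ⊗[k] S)) : T ∈ LinearMap.range (psi k A S) := by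
  let b := Module.finBasis k S
  let γ : Fin (Module.finrank k S) → centroid k A := fun i =>
    ⟨_, rightSlice_comp_mem_centroid (b.coord i) hT⟩
  refine ⟨∑ i, γ i ⊗ₜ b i,
    centroid_ext (span_tmul_one_mul_eq_top hA) (psi_mem_centroid _) hT ?_⟩
  rintro _ ⟨a, rfl⟩
  calc psi k A S (∑ i, γ i ⊗ₜ b i) (a ⊗ₜ 1)
      = ∑ i, rightSlice A (b.coord i) (T (a ⊗ₜ 1)) ⊗ₜ[k] b i := by
        simp [γ, psi_tmul]
    _ = T (a ⊗ₜ 1) := sum_rightSlice_coord_tmul b _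

end Psi

/-- Lemma 1.1(i): if `A` is perfect and `S` is a finite-dimensional commutative associative
unital algebra, then `ψ : C(A) ⊗ S → C(A ⊗ S)` is an isomorphism of associative algebras. -/
theorem psi_isomorphism_of_perfect_of_finiteDimensional
    (k A S : Type) [Field k] [NonUnitalNonAssocRing A] [Module k A]
    [SMulCommClass k A A] [IsScalarTower k A A] [CommRing S] [Algebra k S]
    (hA : IsPerfectAlg k A) (hS : FiniteDimensional k S) :
    Function.Injective (psi k A S) ∧
      (∀ x y : ↥(centroid k A) ⊗[k] S, psi k A S (x * y) = psi k A S x * psi k A S y) ∧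
      psi k A S 1 = 1 ∧
      (∀ T : Module.End k (A ⊗[k] S),
        T ∈ LinearMap.range (psi k A S) ↔ T ∈ centroid k (A ⊗[k] S)) := by
  have := hS
  refine ⟨psi_injective, fun x y => ?_, ?_, fun T => ⟨?_, mem_range_psi_of_mem_centroid hA⟩⟩
  · rw [← psiAlgHom_toLinearMap]
    exact map_mul (psiAlgHom k A S) x y
  · rw [← psiAlgHom_toLinearMap]
    exact map_one (psiAlgHom k A S)
  · rintro ⟨u, rfl⟩
    exact psi_mem_centroid u

end
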